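/- Let U ⊆ {1,2,3}^k be such that in each coordinate only two of the three symbols occur. Let H_1, H_2, H_3 be the subgroups of Sym(U) preserving (pointwise) the coordinates where only {1,2}, only {2,3}, and only {1,3} occur, respectively. Then U is a USP if and only if H_1, H_2, H_3 satisfy the triple product property in Sym(U). -/

import Mathlib

/-!
In a coordinate where only the symbols `a` and `b` occur, a permutation of the finite set `U`
that never turns an `a` into a `b` maps the `a`-entries into, hence onto, themselves, and so
preserves the coordinate. Hence, when every coordinate misses a symbol, `π ∈ avoidSubgroup U s`
says that `π` never turns an `a` into a `b` anywhere, for `{s, a, b} = {0, 1, 2}`. With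
`h₁ = π₁ π₂⁻¹`, `h₂ = π₂ π₃⁻¹`, `h₃ = π₃ π₁⁻¹`, the three pairs of equalities in the USP condition
are exactly the failures of these conditions on `h₁, h₂, h₃`, and every triple with
`h₁ h₂ h₃ = 1` arises this way.
-/

/-- At least two of three propositions hold. -/
def AtLeastTwo (P Q R : Prop) : Prop := (P ∧ Q) ∨ (P ∧ R) ∨ (Q ∧ R)

/-- A USP (symbols `1,2,3` represented by `0,1,2 : Fin 3`). -/
def IsUSP {k : ℕ} (U : Set (Fin k → Fin 3)) : Prop :=
  ∀ π₁ π₂ π₃ : Equiv.Perm U, (π₁ = π₂ ∧ π₂ = π₃) ∨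
    ∃ u : U, ∃ i : Fin k,
      AtLeastTwo (((π₁ u : U) : Fin k → Fin 3) i = 0)
        (((π₂ u : U) : Fin k → Fin 3) i = 1)
        (((π₃ u : U) : Fin k → Fin 3) i = 2)

/-- The subgroup of `Sym(U)` preserving all coordinates in which the symbol `s`
does not occur (i.e. in which only the other two symbols occur). -/
def avoidSubgroup {k : ℕ} (U : Set (Fin k → Fin 3)) (s : Fin 3) :
    Set (Equiv.Perm U) :=
  {π | ∀ (u : U) (j : Fin k), (∀ v : U, ((v : Fin k → Fin 3) j ≠ s)) →
    ((π u : U) : Fin k → Fin 3) j = (u : Fin k → Fin 3) j}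

lemma tripleProduct_iff {G : Type*} [Group G] (S₁ S₂ S₃ : Set G) :
    (∀ h₁ ∈ S₁, ∀ h₂ ∈ S₂, ∀ h₃ ∈ S₃, h₁ * h₂ * h₃ = 1 → h₁ = 1 ∧ h₂ = 1 ∧ h₃ = 1) ↔
      ∀ π₁ π₂ π₃ : G, π₁ * π₂⁻¹ ∈ S₁ → π₂ * π₃⁻¹ ∈ S₂ → π₃ * π₁⁻¹ ∈ S₃ →
        π₁ = π₂ ∧ π₂ = π₃ := by
  constructor
  · intro h π₁ π₂ π₃ h₁ h₂ h₃
    obtain ⟨e₁, e₂, -⟩ := h _ h₁ _ h₂ _ h₃ (by group)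
    exact ⟨mul_inv_eq_one.mp e₁, mul_inv_eq_one.mp e₂⟩
  · intro h h₁ m₁ h₂ m₂ h₃ m₃ hprod
    have hh₃ : h₃ = (h₁ * h₂)⁻¹ := eq_inv_of_mul_eq_one_right hprod
    obtain ⟨e₁, rfl⟩ := h (h₁ * h₂) h₂ 1 (by simpa using m₁) (by simpa using m₂)
      (by simpa [hh₃] using m₃)
    obtain rfl : h₁ = 1 := by simpa using e₁
    simp [hh₃]

lemma Equiv.Perm.apply_eq_of_two_values {α β : Type*} [Finite α] (g : Equiv.Perm α)
    (c : α → β) {a b : β} (hab : a ≠ b) (hc : ∀ x, c x = a ∨ c x = b)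
    (h : ∀ x, c x = a → c (g x) ≠ b) (x : α) : c (g x) = c x := by
  have maps_a : ∀ x, c x = a → c (g x) = a := fun x hx => (hc (g x)).resolve_right (h x hx)
  rcases hc x with hx | hx
  · rw [hx, maps_a x hx]
  · refine hx ▸ (hc (g x)).resolve_left fun hgx => hab ?_
    simpa [hx] using (perm_symm_on_of_perm_on_finite maps_a hgx).symm

lemma Fin.three_eq_or_eq_or_eq {s a b : Fin 3} (hsa : s ≠ a) (hsb : s ≠ b) (hab : a ≠ b)
    (t : Fin 3) : t = s ∨ t = a ∨ t = b := by
  revert s a b t; decide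

section USP

variable {k : ℕ} {U : Set (Fin k → Fin 3)}

lemma mem_avoidSubgroup_iff
    (htwo : ∀ j : Fin k, ∃ s : Fin 3, ∀ u : U, (u : Fin k → Fin 3) j ≠ s)
    {g : Equiv.Perm U} {s a b : Fin 3} (hsa : s ≠ a) (hsb : s ≠ b) (hab : a ≠ b) :
    g ∈ avoidSubgroup U s ↔
      ∀ (v : U) (i : Fin k), (v : Fin k → Fin 3) i = a → ((g v : U) : Fin k → Fin 3) i ≠ b := by
  constructor
  · intro hg v i hv hgv
    obtain ⟨t, ht⟩ := htwo i
    rcases Fin.three_eq_or_eq_or_eq hsa hsb hab t with rfl | rfl | rfl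
    · exact hab (hv.symm.trans ((hg v i ht).symm.trans hgv))
    · exact ht v hv
    · exact ht (g v) hgv
  · intro hg u j hj
    exact g.apply_eq_of_two_values (fun v : U => (v : Fin k → Fin 3) j) hab
      (fun v => (Fin.three_eq_or_eq_or_eq hsa hsb hab _).resolve_left (hj v))
      (fun v hv => hg v j hv) u

lemma forall_not_and_iff_mul_inv (π σ : Equiv.Perm U) (a b : Fin 3) :
    (∀ (u : U) (i : Fin k),
        ¬(((π u : U) : Fin k → Fin 3) i = b ∧ ((σ u : U) : Fin k → Fin 3) i = a)) ↔
      ∀ (v : U) (i : Fin k),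
        (v : Fin k → Fin 3) i = a → (((π * σ⁻¹) v : U) : Fin k → Fin 3) i ≠ b := by
  constructor
  · intro h v i hv hb
    exact h (σ⁻¹ v) i ⟨by simpa using hb, by simpa using hv⟩
  · rintro h u i ⟨hb, ha⟩
    exact h (σ u) i ha (by simpa using hb)

lemma forall_not_atLeastTwo_iff
    (htwo : ∀ j : Fin k, ∃ s : Fin 3, ∀ u : U, (u : Fin k → Fin 3) j ≠ s)
    (π₁ π₂ π₃ : Equiv.Perm U) :
    (∀ (u : U) (i : Fin k),
        ¬AtLeastTwo (((π₁ u : U) : Fin k → Fin 3) i = 0) (((π₂ u : U) : Fin k → Fin 3) i = 1)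
          (((π₃ u : U) : Fin k → Fin 3) i = 2)) ↔
      π₁ * π₂⁻¹ ∈ avoidSubgroup U 2 ∧ π₂ * π₃⁻¹ ∈ avoidSubgroup U 0 ∧
        π₃ * π₁⁻¹ ∈ avoidSubgroup U 1 := by
  rw [mem_avoidSubgroup_iff htwo (a := 1) (b := 0) (by decide) (by decide) (by decide),
    mem_avoidSubgroup_iff htwo (a := 2) (b := 1) (by decide) (by decide) (by decide),
    mem_avoidSubgroup_iff htwo (a := 0) (b := 2) (by decide) (by decide) (by decide),
    ← forall_not_and_iff_mul_inv, ← forall_not_and_iff_mul_inv, ← forall_not_and_iff_mul_inv]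
  simp only [AtLeastTwo, not_or, forall_and]
  constructor
  · rintro ⟨h₁₂, h₁₃, h₂₃⟩
    exact ⟨h₁₂, h₂₃, fun u i hc => h₁₃ u i hc.symm⟩
  · rintro ⟨h₁₂, h₂₃, h₃₁⟩
    exact ⟨h₁₂, fun u i hc => h₃₁ u i hc.symm, h₂₃⟩

end USP

theorem stmt_9 {k : ℕ} (U : Set (Fin k → Fin 3))
    (htwo : ∀ j : Fin k, ∃ s : Fin 3, ∀ u : U, (u : Fin k → Fin 3) j ≠ s) :
    IsUSP U ↔
      (∀ h₁ ∈ avoidSubgroup U 2, ∀ h₂ ∈ avoidSubgroup U 0, ∀ h₃ ∈ avoidSubgroup U 1,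
        h₁ * h₂ * h₃ = 1 → h₁ = 1 ∧ h₂ = 1 ∧ h₃ = 1) := by
  rw [tripleProduct_iff]
  refine forall₃_congr fun π₁ π₂ π₃ => ?_
  simp only [or_iff_not_imp_right, not_exists, forall_not_atLeastTwo_iff htwo, and_imp]
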